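/- Let U ⊆ ℂ be open and let W, X, λ, γ : U → ℂ be differentiable functions (with λ, γ real-valued) satisfying the Wirtinger equations ∂_w̄ X = -W ∂_w̄(λ - γ) and ∂_w̄ W = -X ∂_w̄(λ - γ). Then ∂_w̄((W + X)e^{λ-γ}) = 0 and ∂_w̄((W - X)e^{-(λ-γ)}) = 0; that is, (W+X)e^{λ-γ} and (W-X)e^{γ-λ} are holomorphic on U. -/

import Mathlib

/-- The Wirtinger derivative ∂/∂w̄ of a map g : ℂ → ℂ, viewed as a map of
real Fréchet-differentiable functions: ∂_w̄ g = (1/2)(∂_u g + i ∂_v g). -/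
noncomputable def dbar (g : ℂ → ℂ) (z : ℂ) : ℂ :=
  (1 / 2) * (fderiv ℝ g z 1 + Complex.I * fderiv ℝ g z Complex.I)

/-!
Since `∂_w̄` is a derivation, `∂_w̄ (f e^φ) = (∂_w̄ f + f ∂_w̄ φ) e^φ`, so `f e^φ` is holomorphic
as soon as `∂_w̄ f = -f ∂_w̄ φ`. Adding and subtracting the two equations gives
`∂_w̄ (W ± X) = ∓(W ± X) ∂_w̄ (λ - γ)`, which is this condition for `f = W + X, φ = λ - γ` and for
`f = W - X, φ = -(λ - γ)`.
-/

open Complex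

section Wirtinger

variable {f g φ : ℂ → ℂ} {z : ℂ}

lemma dbar_add (hf : DifferentiableAt ℝ f z) (hg : DifferentiableAt ℝ g z) :
    dbar (fun w => f w + g w) z = dbar f z + dbar g z := by
  simp only [dbar, fderiv_fun_add hf hg, add_apply]
  ring

lemma dbar_sub (hf : DifferentiableAt ℝ f z) (hg : DifferentiableAt ℝ g z) :
    dbar (fun w => f w - g w) z = dbar f z - dbar g z := by
  simp only [dbar, fderiv_fun_sub hf hg, sub_apply]
  ring

lemma dbar_neg (f : ℂ → ℂ) (z : ℂ) : dbar (fun w => -f w) z = -dbar f z := by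
  simp only [dbar, fderiv_fun_neg, neg_apply]
  ring

lemma dbar_mul (hf : DifferentiableAt ℝ f z) (hg : DifferentiableAt ℝ g z) :
    dbar (fun w => f w * g w) z = f z * dbar g z + g z * dbar f z := by
  simp only [dbar, fderiv_fun_mul hf hg, add_apply,
    smul_apply, smul_eq_mul]
  ring

lemma dbar_cexp (hf : DifferentiableAt ℝ f z) :
    dbar (fun w => cexp (f w)) z = cexp (f z) * dbar f z := by
  simp only [dbar, hf.hasFDerivAt.cexp.fderiv, smul_apply, smul_eq_mul]
  ring

lemma dbar_mul_cexp (hf : DifferentiableAt ℝ f z) (hφ : DifferentiableAt ℝ φ z) :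
    dbar (fun w => f w * cexp (φ w)) z = (dbar f z + f z * dbar φ z) * cexp (φ z) := by
  rw [dbar_mul hf hφ.cexp, dbar_cexp hφ]
  ring

lemma dbar_mul_cexp_eq_zero (hf : DifferentiableAt ℝ f z) (hφ : DifferentiableAt ℝ φ z)
    (h : dbar f z = -f z * dbar φ z) : dbar (fun w => f w * cexp (φ w)) z = 0 := by
  rw [dbar_mul_cexp hf hφ, h]
  ring

end Wirtinger

/-- If W, X : U → ℂ and λ, γ : U → ℝ are C¹ on an open U ⊆ ℂ and
∂_w̄ X = -W ∂_w̄(λ-γ), ∂_w̄ W = -X ∂_w̄(λ-γ) hold on U, then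
∂_w̄((W+X)e^{λ-γ}) = 0 and ∂_w̄((W-X)e^{-(λ-γ)}) = 0 on U, i.e. (W+X)e^{λ-γ}
and (W-X)e^{γ-λ} are holomorphic on U. -/
theorem stmt_17 (U : Set ℂ) (hU : IsOpen U)
    (W X : ℂ → ℂ) (lam gam : ℂ → ℝ)
    (hW : ContDiffOn ℝ 1 W U) (hX : ContDiffOn ℝ 1 X U)
    (hlam : ContDiffOn ℝ 1 lam U) (hgam : ContDiffOn ℝ 1 gam U)
    (heqX : ∀ z ∈ U, dbar X z = -(W z) * dbar (fun w => ((lam w - gam w : ℝ) : ℂ)) z)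
    (heqW : ∀ z ∈ U, dbar W z = -(X z) * dbar (fun w => ((lam w - gam w : ℝ) : ℂ)) z) :
    ∀ z ∈ U,
      dbar (fun w => (W w + X w) * Complex.exp ((lam w - gam w : ℝ) : ℂ)) z = 0 ∧
      dbar (fun w => (W w - X w) * Complex.exp (-((lam w - gam w : ℝ) : ℂ))) z = 0 := by
  intro z hz
  have hUz := hU.mem_nhds hz
  have hWz := (hW.contDiffAt hUz).differentiableAt one_ne_zero
  have hXz := (hX.contDiffAt hUz).differentiableAt one_ne_zero
  have hφ : DifferentiableAt ℝ (fun w => ((lam w - gam w : ℝ) : ℂ)) z :=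
    ofRealCLM.differentiableAt.comp z
      (((hlam.contDiffAt hUz).differentiableAt one_ne_zero).sub
        ((hgam.contDiffAt hUz).differentiableAt one_ne_zero))
  constructor
  · refine dbar_mul_cexp_eq_zero (hWz.add hXz) hφ ?_
    rw [dbar_add hWz hXz, heqW z hz, heqX z hz]
    ring
  · refine dbar_mul_cexp_eq_zero (hWz.sub hXz) hφ.neg ?_
    rw [dbar_sub hWz hXz, dbar_neg, heqW z hz, heqX z hz]
    ring
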